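/- arXiv:2003.07322 — 3 statements merged into one kernel-verified Lean document; each statement's English description precedes it below -/
import Mathlib

section
/- Let F be a field, k < n, and H(z) = H_0 + H_1 z + ... + H_ν z^ν ∈ F[z]^{(n-k)×n} with coefficients H_i ∈ F^{(n-k)×n}. Set δ = (n-k)ν and r = ⌊δ/k⌋. Define the block matrix H̄ ∈ F^{(n-k)(r+ν+1) × n(r+1)} whose (i,j)-th block (for 0 ≤ i ≤ r+ν, 0 ≤ j ≤ r) is H_{i-j} (with H_s = 0 for s < 0 or s > ν). If H̄ has full row rank, then H(z) has a polynomial right inverse, and hence H(z) is left prime. -/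
open Polynomial Matrix

/-- A polynomial matrix `H` is left prime if in every factorization `H = M * H'`
with `M` square polynomial, the left factor `M` is unimodular (a unit). -/
def IsLeftPrimeMat {F : Type*} [Field F] {p q : ℕ}
    (H : Matrix (Fin p) (Fin q) (Polynomial F)) : Prop :=
  ∀ (M : Matrix (Fin p) (Fin p) (Polynomial F))
    (H' : Matrix (Fin p) (Fin q) (Polynomial F)),
    H = M * H' → IsUnit M

/-- A matrix over a field with full row rank has a right inverse. -/
lemma exists_right_inverse_of_rank_eq_card {F : Type*} [Field F] {m p : Type*}
    [Fintype m] [Fintype p] [DecidableEq m]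
    (A : Matrix m p F) (h : A.rank = Fintype.card m) :
    ∃ B : Matrix p m F, A * B = 1 := by
  rw [← Matrix.mulVec_surjective_iff_exists_right_inverse]
  have hr : LinearMap.range A.mulVecLin = ⊤ := by
    apply Submodule.eq_top_of_finrank_eq
    rw [← Matrix.rank, h, Module.finrank_fintype_fun_eq_card]
  intro y
  obtain ⟨x, hx⟩ := LinearMap.range_eq_top.mp hr y
  exact ⟨x, hx⟩

/-- If the stacked sliding coefficient matrix `H̄` (block `(i,j)` equal to
`H_{i-j}`, of size `(n-k)(r+ν+1) × n(r+1)` with `δ = (n-k)ν`, `r = ⌊δ/k⌋`)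
has full row rank, then `H(z) = Σ H_i z^i` has a polynomial right inverse
and hence is left prime. -/
theorem stmt1 {F : Type*} [Field F] (n k ν : ℕ) (hk0 : 0 < k) (hk : k < n)
    (H : ℕ → Matrix (Fin (n - k)) (Fin n) F)
    (hHν : ∀ s, ν < s → H s = 0)
    (hrank :
      (Matrix.of fun (i : Fin ((n - k) * ν / k + ν + 1) × Fin (n - k))
          (j : Fin ((n - k) * ν / k + 1) × Fin n) =>
          if (j.1 : ℕ) ≤ (i.1 : ℕ) then H ((i.1 : ℕ) - (j.1 : ℕ)) i.2 j.2 else 0).rank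
        = Fintype.card (Fin ((n - k) * ν / k + ν + 1) × Fin (n - k))) :
    ∀ HP : Matrix (Fin (n - k)) (Fin n) (Polynomial F),
      (∀ a b, HP a b = ∑ s ∈ Finset.range (ν + 1), Polynomial.C (H s a b) * Polynomial.X ^ s) →
      (∃ XP : Matrix (Fin n) (Fin (n - k)) (Polynomial F), HP * XP = 1) ∧
        IsLeftPrimeMat HP := by
  intro HP hHP
  set r : ℕ := (n - k) * ν / k with hrdef
  -- The stacked matrix
  set Hbar : Matrix (Fin (r + ν + 1) × Fin (n - k)) (Fin (r + 1) × Fin n) F :=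
    Matrix.of fun i j =>
      if (j.1 : ℕ) ≤ (i.1 : ℕ) then H ((i.1 : ℕ) - (j.1 : ℕ)) i.2 j.2 else 0 with hHbar
  obtain ⟨B, hB⟩ := exists_right_inverse_of_rank_eq_card Hbar hrank
  -- The target matrix: identity block on top, zeros below.
  set E : Matrix (Fin (r + ν + 1) × Fin (n - k)) (Fin (n - k)) F :=
    fun i b => if (i.1 : ℕ) = 0 ∧ i.2 = b then 1 else 0 with hE
  set Xbar : Matrix (Fin (r + 1) × Fin n) (Fin (n - k)) F := B * E with hXbardef
  have hXbar : Hbar * Xbar = E := by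
    rw [hXbardef, ← Matrix.mul_assoc, hB, Matrix.one_mul]
  -- ℕ-indexed coefficients of the candidate right inverse
  set Y : ℕ → Fin n → Fin (n - k) → F :=
    fun j c b => if h : j < r + 1 then Xbar (⟨j, h⟩, c) b else 0 with hYdef
  set XP : Matrix (Fin n) (Fin (n - k)) (Polynomial F) :=
    Matrix.of fun c b => ∑ j ∈ Finset.range (r + 1), Polynomial.C (Y j c b) * Polynomial.X ^ j
    with hXP
  have hcoeffH : ∀ (s : ℕ) a c, (HP a c).coeff s = H s a c := by
    intro s a c
    rw [hHP, Polynomial.finset_sum_coeff]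
    simp only [Polynomial.coeff_C_mul, Polynomial.coeff_X_pow, mul_ite, mul_one, mul_zero]
    rw [Finset.sum_ite_eq (Finset.range (ν + 1)) s (fun s' => H s' a c)]
    by_cases hs : s ∈ Finset.range (ν + 1)
    · rw [if_pos hs]
    · rw [if_neg hs, hHν s (by simpa using Nat.lt_of_succ_le (Nat.not_lt.mp
        (by simpa [Finset.mem_range] using hs)))]
      simp
  have hcoeffX : ∀ (j : ℕ) c b, (XP c b).coeff j = Y j c b := by
    intro j c b
    rw [hXP]
    simp only [Matrix.of_apply]
    rw [Polynomial.finset_sum_coeff]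
    simp only [Polynomial.coeff_C_mul, Polynomial.coeff_X_pow, mul_ite, mul_one, mul_zero]
    rw [Finset.sum_ite_eq (Finset.range (r + 1)) j (fun j' => Y j' c b)]
    by_cases hj : j ∈ Finset.range (r + 1)
    · rw [if_pos hj]
    · rw [if_neg hj]
      simp only [Finset.mem_range] at hj
      simp only [hYdef]
      rw [dif_neg hj]
  have key : HP * XP = 1 := by
    ext a b t
    rw [Matrix.mul_apply, Polynomial.finset_sum_coeff]
    simp only [Polynomial.coeff_mul, hcoeffH, hcoeffX]
    -- swap and reindex the sums
    rw [Finset.sum_comm]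
    rw [Finset.Nat.sum_antidiagonal_eq_sum_range_succ_mk]
    -- reflect so that the running index is the exponent of X in XP
    have hreflect :
        (∑ s ∈ Finset.range (t + 1), ∑ c, H s a c * Y (t - s) c b)
          = ∑ j ∈ Finset.range (t + 1), ∑ c, H (t - j) a c * Y j c b := by
      rw [← Finset.sum_range_reflect (fun j => ∑ c, H (t - j) a c * Y j c b) (t + 1)]
      apply Finset.sum_congr rfl
      intro s hs
      simp only [Finset.mem_range] at hs
      have h1 : t + 1 - 1 - s = t - s := by omega
      have h2 : t - (t - s) = s := by omega
      rw [h1, h2]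
    rw [hreflect]
    -- common abbreviation
    set G : ℕ → F := fun j => ∑ c, H (t - j) a c * Y j c b with hG
    have hGzero : ∀ j, r < j → G j = 0 := by
      intro j hj
      rw [hG]
      apply Finset.sum_eq_zero
      intro c _
      rw [hYdef]
      simp only
      rw [dif_neg (by omega), mul_zero]
    have hRHS : (1 : Matrix (Fin (n - k)) (Fin (n - k)) (Polynomial F)) a b
        = if a = b then (1 : Polynomial F) else 0 := Matrix.one_apply
    by_cases ht : t < r + ν + 1
    · -- use the linear-algebra identity at row block t
      have hlin := congrFun (congrFun hXbar (⟨t, ht⟩, a)) b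
      rw [Matrix.mul_apply, Fintype.sum_prod_type] at hlin
      have hlhs : (∑ j : Fin (r + 1), ∑ c, Hbar (⟨t, ht⟩, a) (j, c) * Xbar (j, c) b)
          = ∑ j ∈ Finset.range (r + 1), if j ≤ t then G j else 0 := by
        rw [← Fin.sum_univ_eq_sum_range (fun j => if j ≤ t then G j else 0) (r + 1)]
        apply Finset.sum_congr rfl
        intro j _
        rw [hHbar]
        simp only [Matrix.of_apply]
        by_cases hjt : (j : ℕ) ≤ t
        · rw [if_pos hjt, hG]
          rw [Finset.sum_congr rfl (fun c _ => by rw [if_pos hjt])]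
          apply Finset.sum_congr rfl
          intro c _
          rw [hYdef]
          simp only
          rw [dif_pos j.isLt]
        · rw [if_neg hjt]
          apply Finset.sum_eq_zero
          intro c _
          rw [if_neg hjt, zero_mul]
      rw [hlhs] at hlin
      -- bridge between the two range sums
      have hbridge : (∑ j ∈ Finset.range (t + 1), G j)
          = ∑ j ∈ Finset.range (r + 1), if j ≤ t then G j else 0 := by
        have hL : (∑ j ∈ Finset.range (t + 1), G j)
            = ∑ j ∈ Finset.range (max t r + 1), if j ≤ t ∧ j ≤ r then G j else 0 := by
          rw [← Finset.sum_subset (Finset.range_subset_range.mpr (by omega : t + 1 ≤ max t r + 1))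
            (fun j _ hj => by
              simp only [Finset.mem_range] at hj
              rw [if_neg (by omega : ¬(j ≤ t ∧ j ≤ r))])]
          apply Finset.sum_congr rfl
          intro j hj
          simp only [Finset.mem_range] at hj
          by_cases hjr : j ≤ r
          · rw [if_pos ⟨by omega, hjr⟩]
          · rw [if_neg (by tauto), hGzero j (by omega)]
        have hR : (∑ j ∈ Finset.range (r + 1), if j ≤ t then G j else 0)
            = ∑ j ∈ Finset.range (max t r + 1), if j ≤ t ∧ j ≤ r then G j else 0 := by
          rw [← Finset.sum_subset (Finset.range_subset_range.mpr (by omega : r + 1 ≤ max t r + 1))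
            (fun j _ hj => by
              simp only [Finset.mem_range] at hj
              rw [if_neg (by omega : ¬(j ≤ t ∧ j ≤ r))])]
          apply Finset.sum_congr rfl
          intro j hj
          simp only [Finset.mem_range] at hj
          by_cases hjt : j ≤ t
          · rw [if_pos hjt, if_pos ⟨hjt, by omega⟩]
          · rw [if_neg hjt, if_neg (by tauto)]
        rw [hL, hR]
      rw [hbridge, hlin, hRHS]
      simp only [hE]
      by_cases hab : a = b
      · by_cases ht0 : t = 0
        · simp [hab, ht0]
        · simp [hab, ht0, Polynomial.coeff_one]
      · simp [hab]
    · -- degree too large: everything vanishes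
      have hL0 : (∑ j ∈ Finset.range (t + 1), G j) = 0 := by
        apply Finset.sum_eq_zero
        intro j hj
        simp only [Finset.mem_range] at hj
        by_cases hjr : r < j
        · exact hGzero j hjr
        · rw [hG]
          apply Finset.sum_eq_zero
          intro c _
          rw [hHν (t - j) (by omega)]
          simp
      rw [hL0, hRHS]
      by_cases hab : a = b
      · rw [if_pos hab, Polynomial.coeff_one, if_neg (show ¬ t = 0 from fun h => ht (by simp [h]))]
      · rw [if_neg hab]
        simp
  refine ⟨⟨XP, key⟩, ?_⟩
  intro M H' hEq
  have hMinv : M * (H' * XP) = 1 := by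
    rw [← Matrix.mul_assoc, ← hEq, key]
  have : Invertible M := invertibleOfRightInverse M (H' * XP) hMinv
  exact isUnit_of_invertible M
end

section
/- Let F be a field, k < n, and suppose (n-k) divides δ; set ν = δ/(n-k) and L = ⌊δ/k⌋ + δ/(n-k). Let H(z) = Σ_{i=0}^{ν} H_i z^i ∈ F[z]^{(n-k)×n}. Define the L-th truncated sliding parity-check matrix H_L^c ∈ F^{(L+1)(n-k)×(L+1)n} as the lower block-triangular matrix with (i,j)-block H_{i-j} (zero for i < j or i-j > ν). If every full-size minor of H_L^c formed by columns with indices t_1 < ... < t_{(L+1)(n-k)} satisfying t_{s(n-k)+1} ≤ sn for s = 1,...,L is nonzero, then H(z) is left prime. -/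
open Polynomial Matrix

/-
The leading `(L + 1)(n - k)` columns of `H_L^c` satisfy the index condition, so they form an
invertible square matrix `A`. Solving `A x = e_(0,a)` and reading `x` blockwise as the coefficients
of a polynomial vector `v_a` gives `H(z) v_a = e_a`: the coefficient of `z^d` of `H(z) v_a` is row
block `d` of `A x` for `d ≤ L`, and vanishes for `d > L` because, with `L = ⌊δ/k⌋ + ν`, the chosen
columns lie in the first `⌊δ/k⌋ + 1` column blocks. Thus `H(z)` has a polynomial right inverse, so
every square left factor of `H(z)` is unimodular.
-/

theorem IsLeftPrimeMat.of_mul_eq_one {F : Type*} [Field F] {p q : ℕ}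
    {H : Matrix (Fin p) (Fin q) F[X]} {R : Matrix (Fin q) (Fin p) F[X]} (hR : H * R = 1) :
    IsLeftPrimeMat H := by
  rintro M H' rfl
  rw [Matrix.mul_assoc] at hR
  exact (isUnit_iff_isUnit_det M).mpr (isUnit_det_of_right_inverse hR)

theorem Matrix.exists_mul_eq_one_of_forall_mulVec_eq_single {m n R : Type*} [Semiring R]
    [Fintype n] [DecidableEq m] {A : Matrix m n R}
    (h : ∀ i, ∃ v, A *ᵥ v = Pi.single i 1) : ∃ B : Matrix n m R, A * B = 1 := by
  choose cols hcols using h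
  refine ⟨(Matrix.of cols)ᵀ, Matrix.ext fun i j ↦ ?_⟩
  rw [one_eq_pi_single, Pi.single_comm, ← hcols j]
  rfl

theorem Polynomial.coeff_sum_range_C_mul_X_pow {R : Type*} [Semiring R] {c : ℕ → R} {ν : ℕ}
    (hc : ∀ s, ν < s → c s = 0) (d : ℕ) :
    (∑ s ∈ Finset.range (ν + 1), C (c s) * X ^ s).coeff d = c d := by
  simp only [finsetSum_coeff, coeff_C_mul_X_pow, Finset.sum_ite_eq, Finset.mem_range]
  split_ifs with hd
  · rfl
  · exact (hc d (by omega)).symm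

section StackPoly

variable {R : Type*} [CommSemiring R] {N : ℕ}

/-- Reads `x` as the stacked coefficient vectors of a polynomial vector: block `s` (of length `q`)
is the coefficient of `X ^ s`. -/
noncomputable def stackPoly (q : ℕ) (x : Fin N → R) : Fin q → R[X] :=
  fun b ↦ ∑ j : Fin N, if (j : ℕ) % q = b then C (x j) * X ^ ((j : ℕ) / q) else 0

theorem mulVec_stackPoly_apply {p q : ℕ} (hq : 0 < q) (P : Matrix (Fin p) (Fin q) R[X])
    (x : Fin N → R) (a : Fin p) :
    (P *ᵥ stackPoly q x) a =
      ∑ j : Fin N, P a ⟨j % q, Nat.mod_lt _ hq⟩ * (C (x j) * X ^ ((j : ℕ) / q)) := by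
  simp only [mulVec, dotProduct, stackPoly, Finset.mul_sum, mul_ite, mul_zero]
  rw [Finset.sum_comm]
  refine Finset.sum_congr rfl fun j _ ↦ ?_
  simp only [← Fin.ext_iff (a := ⟨j % q, Nat.mod_lt _ hq⟩), Finset.sum_ite_eq, Finset.mem_univ,
    if_true]

theorem coeff_mulVec_stackPoly {p q : ℕ} (hq : 0 < q) (P : Matrix (Fin p) (Fin q) R[X])
    (x : Fin N → R) (a : Fin p) (d : ℕ) :
    ((P *ᵥ stackPoly q x) a).coeff d = ∑ j : Fin N,
      if (j : ℕ) / q ≤ d then (P a ⟨j % q, Nat.mod_lt _ hq⟩).coeff (d - j / q) * x j else 0 := by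
  simp only [mulVec_stackPoly_apply hq, finsetSum_coeff, ← mul_assoc, coeff_mul_X_pow',
    coeff_mul_C]

theorem mulVec_stackPoly_eq_single {p q ν L N : ℕ} (hq : 0 < q) {P : Matrix (Fin p) (Fin q) R[X]}
    (hP : ∀ a b, (P a b).natDegree ≤ ν) (hN : ∀ j : Fin N, (j : ℕ) / q + ν ≤ L)
    {A : Matrix (Fin ((L + 1) * p)) (Fin N) R}
    (hA : ∀ (d : Fin (L + 1)) (a : Fin p) (j : Fin N), A (finProdFinEquiv (d, a)) j =
      if (j : ℕ) / q ≤ d then (P a ⟨j % q, Nat.mod_lt _ hq⟩).coeff (d - j / q) else 0)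
    {x : Fin N → R} {a : Fin p} (hx : A *ᵥ x = Pi.single (finProdFinEquiv (0, a)) 1) :
    P *ᵥ stackPoly q x = Pi.single a 1 := by
  funext a'
  ext d
  rw [coeff_mulVec_stackPoly hq]
  by_cases hd : d ≤ L
  · have hrow := congrFun hx (finProdFinEquiv (⟨d, by omega⟩, a'))
    simp only [mulVec, dotProduct, hA, ite_mul, zero_mul] at hrow
    rw [hrow]
    by_cases ha : a' = a <;> simp [Pi.single_apply, coeff_one, Prod.ext_iff, ha]
  · rw [Finset.sum_eq_zero fun j _ ↦ ?_]
    · by_cases ha : a' = a <;> simp [coeff_one, ha]; omega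
    split_ifs with hj
    · rw [coeff_eq_zero_of_natDegree_lt ((hP _ _).trans_lt (by have := hN j; omega)), zero_mul]
    · rfl

end StackPoly

theorem div_add_le_of_lt_mul_sub {n k δ ν j : ℕ} (hk0 : 0 < k) (hk : k ≤ n)
    (hδ : ν * (n - k) = δ) (hj : j < (δ / k + ν + 1) * (n - k)) : j / n + ν ≤ δ / k + ν := by
  have hδk : δ < (δ / k + 1) * k := Nat.lt_mul_of_div_lt (Nat.lt_succ_self _) hk0
  have hsplit : (δ / k + ν + 1) * (n - k) + (δ / k + 1) * k = (δ / k + 1) * n + ν * (n - k) := by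
    zify [hk]
    ring
  have hjn : j < (δ / k + 1) * n := by omega
  have := (Nat.div_lt_iff_lt_mul (by omega)).mpr hjn
  omega

theorem apply_finProdFinEquiv_of_eq_blockToeplitz {R : Type*} [Zero R] {p q M N : ℕ}
    (hp : 0 < p) (hq : 0 < q) (H : ℕ → Matrix (Fin p) (Fin q) R)
    {T : Matrix (Fin (M * p)) (Fin N) R}
    (hT : ∀ i j, T i j = if (j : ℕ) / q ≤ (i : ℕ) / p then
      H (i / p - j / q) ⟨i % p, Nat.mod_lt _ hp⟩ ⟨j % q, Nat.mod_lt _ hq⟩ else 0)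
    (d : Fin M) (a : Fin p) (j : Fin N) :
    T (finProdFinEquiv (d, a)) j =
      if (j : ℕ) / q ≤ d then H (d - j / q) a ⟨j % q, Nat.mod_lt _ hq⟩ else 0 := by
  have hdiv : ((a : ℕ) + p * d) / p = d := by
    rw [Nat.add_mul_div_left _ _ hp, Nat.div_eq_of_lt a.isLt, zero_add]
  have hmod : ((a : ℕ) + p * d) % p = a := by
    rw [Nat.add_mul_mod_self_left, Nat.mod_eq_of_lt a.isLt]
  simp only [hT, finProdFinEquiv_apply_val, hdiv, hmod]

/-- If `(n-k) ∣ δ`, `ν = δ/(n-k)`, `L = ⌊δ/k⌋ + δ/(n-k)`, and every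
non-trivially-zero full-size minor of the `L`-th truncated sliding parity-check
matrix `H_L^c` (column indices `t_1 < … < t_{(L+1)(n-k)}` with
`t_{s(n-k)+1} ≤ sn` for `s = 1, …, L`) is nonzero, then `H(z)` is left prime. -/
theorem stmt5 {F : Type*} [Field F] (n k δ ν L : ℕ) (hk0 : 0 < k) (hk : k < n)
    (hdvd : (n - k) ∣ δ) (hν : ν = δ / (n - k))
    (hL : L = δ / k + δ / (n - k))
    (H : ℕ → Matrix (Fin (n - k)) (Fin n) F)
    (hHν : ∀ s, ν < s → H s = 0)
    (Hc : Matrix (Fin ((L + 1) * (n - k))) (Fin ((L + 1) * n)) F)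
    (hHc : ∀ (i : Fin ((L + 1) * (n - k))) (j : Fin ((L + 1) * n)),
      Hc i j =
        if (j : ℕ) / n ≤ (i : ℕ) / (n - k) then
          H ((i : ℕ) / (n - k) - (j : ℕ) / n)
            ⟨(i : ℕ) % (n - k), Nat.mod_lt _ (by omega)⟩
            ⟨(j : ℕ) % n, Nat.mod_lt _ (by omega)⟩
        else 0)
    (hminors : ∀ t : Fin ((L + 1) * (n - k)) → Fin ((L + 1) * n),
      StrictMono t →
      (∀ s, 1 ≤ s → s ≤ L →
        ∀ i : Fin ((L + 1) * (n - k)), (i : ℕ) = s * (n - k) → (t i : ℕ) < s * n) →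
      (Hc.submatrix id t).det ≠ 0) :
    ∀ HP : Matrix (Fin (n - k)) (Fin n) (Polynomial F),
      (∀ a b, HP a b = ∑ s ∈ Finset.range (ν + 1), Polynomial.C (H s a b) * Polynomial.X ^ s) →
      IsLeftPrimeMat HP := by
  intro HP hHP
  have hcoeff : ∀ a b d, (HP a b).coeff d = H d a b := fun a b d ↦ by
    rw [hHP, coeff_sum_range_C_mul_X_pow fun s hs ↦ by rw [hHν s hs, Matrix.zero_apply]]
  have hdeg : ∀ a b, (HP a b).natDegree ≤ ν := fun a b ↦
    natDegree_le_iff_coeff_eq_zero.mpr fun s hs ↦ by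
      rw [hcoeff, hHν s (by exact_mod_cast hs), Matrix.zero_apply]
  have hcols : (L + 1) * (n - k) ≤ (L + 1) * n := Nat.mul_le_mul_left _ (by omega)
  have hA : IsUnit (Hc.submatrix id (Fin.castLE hcols)) := by
    refine (isUnit_iff_isUnit_det _).mpr (hminors _ (Fin.strictMono_castLE hcols) ?_).isUnit
    rintro s hs - i hi
    change (i : ℕ) < s * n
    rw [hi]
    exact Nat.mul_lt_mul_of_pos_left (by omega) (by omega)
  obtain ⟨R, hR⟩ := exists_mul_eq_one_of_forall_mulVec_eq_single fun a ↦ by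
    obtain ⟨x, hx⟩ := mulVec_surjective_iff_isUnit.mpr hA (Pi.single (finProdFinEquiv (0, a)) 1)
    refine ⟨stackPoly n x,
      mulVec_stackPoly_eq_single (by omega) hdeg (fun j ↦ ?_) (fun d a' j ↦ ?_) hx⟩
    · rw [← hν] at hL
      subst hL
      exact div_add_le_of_lt_mul_sub hk0 hk.le (hν ▸ Nat.div_mul_cancel hdvd) j.isLt
    · rw [submatrix_apply, id, apply_finProdFinEquiv_of_eq_blockToeplitz (by omega) (by omega) H hHc]
      simp only [Fin.val_castLE, hcoeff]
  exact .of_mul_eq_one hR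
end

section
/- Let F be a field with at least 2 elements, k < n, and 1 ≤ δ < min(k, n-k). Then there exists a polynomial matrix H(z) = H_0 + H_1 z ∈ F[z]^{(n-k)×n} such that every full-size minor of H_0 is nonzero (so H(z) satisfies the MDP criterion on H_L^c for L = 0), but H(z) is not left prime; indeed one may take H_1 = -H_0, so that H(z) = (z-1)H_0 factors with non-unimodular left factor (z-1)I_{n-k}, provided a matrix H_0 ∈ F^{(n-k)×n} with all full-size minors nonzero exists over F. -/
open Polynomial Matrix

/-- For `1 ≤ δ < k` and `δ < n-k` (so `L = 0`), given `H_0` with all full-size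
minors nonzero, the polynomial matrix `H(z) = H_0 - H_0 z = (1-z)H_0` satisfies
the MDP minor criterion for `L = 0` (its `0`-th sliding matrix is `H_0`) but is
not left prime. -/
theorem stmt10 {F : Type*} [Field F] (n k δ : ℕ) (hk0 : 0 < k) (hk : k < n)
    (hδ1 : 1 ≤ δ) (hδk : δ < k) (hδnk : δ < n - k)
    (H0 : Matrix (Fin (n - k)) (Fin n) F)
    (hminors : ∀ t : Fin (n - k) → Fin n, StrictMono t → (H0.submatrix id t).det ≠ 0) :
    ∃ HP : Matrix (Fin (n - k)) (Fin n) (Polynomial F),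
      (∀ a b, HP a b = Polynomial.C (H0 a b) * (1 - Polynomial.X)) ∧
      (∀ a b, (HP a b).coeff 0 = H0 a b) ∧
      (∀ a b, (HP a b).coeff 1 = -H0 a b) ∧
      ¬ IsLeftPrimeMat HP := by
  refine ⟨fun a b => Polynomial.C (H0 a b) * (1 - Polynomial.X),
    fun a b => rfl, ?_, ?_, ?_⟩
  · intro a b
    simp [Polynomial.coeff_sub, mul_sub]
  · intro a b
    simp [Polynomial.coeff_sub, mul_sub]
  · intro h
    have hnk : 0 < n - k := lt_of_le_of_lt (Nat.zero_le δ) hδnk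
    have := h (((1 : Polynomial F) - Polynomial.X) • (1 : Matrix (Fin (n - k)) (Fin (n - k)) (Polynomial F)))
      (H0.map Polynomial.C) ?_
    · have hdet := (Matrix.isUnit_iff_isUnit_det _).mp this
      simp only [Matrix.det_smul, Matrix.det_one, smul_eq_mul, mul_one, Fintype.card_fin] at hdet
      have hu : IsUnit (1 - Polynomial.X : Polynomial F) :=
        (isUnit_pow_iff (Nat.pos_iff_ne_zero.mp hnk)).mp hdet
      have := Polynomial.natDegree_eq_zero_of_isUnit hu
      have h1 : (1 - Polynomial.X : Polynomial F).natDegree = 1 := by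
        have : (1 - Polynomial.X : Polynomial F) = -(Polynomial.X - Polynomial.C 1) := by
          rw [Polynomial.C_1]; ring
        rw [this, Polynomial.natDegree_neg, Polynomial.natDegree_X_sub_C]
      omega
    · ext a b
      simp [Matrix.mul_apply, Matrix.smul_apply, Matrix.one_apply, mul_comm]
end
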